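/- Let ℍ = {z ∈ ℂ : Im z > 0} be the upper half-plane, let g(z) = z + 1, and let h(z) = i + e^{2πiz}. Then h is a holomorphic self-map of ℍ satisfying h ∘ g = h; consequently, for the sequence g₁ = h and gₙ = g for n > 1, the right compositions Gₙ = g₁ ∘ g₂ ∘ ⋯ ∘ gₙ satisfy Gₙ = h for every n, so (Gₙ) converges to the non-constant map h even though gₙ → g and g has Denjoy–Wolff point ∞. -/

import Mathlib

/-!
Because `h` is `1`-periodic, `h ∘ gⁿ = h`, and a right composition whose first map is `h` and
whose remaining maps all equal `g` is `Gₙ₊₁ = h ∘ gⁿ = h`: the first map absorbs all the later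
ones. That `h` maps `ℍ` into itself comes from `|e^{2πiz}| = e^{-2π Im z} < 1`.
-/

open Complex Set Filter Metric

/-- The open upper half-plane in ℂ. -/
def upperHalf : Set ℂ := {z : ℂ | 0 < z.im}

/-- Right compositions: `rightComp g n = g 0 ∘ g 1 ∘ ⋯ ∘ g (n-1)`, so that `g k`
plays the role of the `(k+1)`-st map `g_{k+1}` of the sequence. -/
def rightComp (g : ℕ → ℂ → ℂ) : ℕ → ℂ → ℂ
  | 0 => id
  | n + 1 => rightComp g n ∘ g n

lemma rightComp_succ_eq_comp (g : ℕ → ℂ → ℂ) (n : ℕ) :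
    rightComp g (n + 1) = g 0 ∘ rightComp (fun k => g (k + 1)) n := by
  induction n with
  | zero => rfl
  | succ n ih => rw [rightComp, ih]; rfl

lemma rightComp_const (f : ℂ → ℂ) (n : ℕ) : rightComp (fun _ => f) n = f^[n] := by
  induction n with
  | zero => rfl
  | succ n ih => rw [rightComp, ih, Function.iterate_succ]

lemma rightComp_succ_of_comp_eq {h f : ℂ → ℂ} (hf : h ∘ f = h) (n : ℕ) :
    rightComp (fun k => if k = 0 then h else f) (n + 1) = h := by
  rw [rightComp_succ_eq_comp]
  simp only [Nat.add_one_ne_zero, if_false, if_true, rightComp_const]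
  induction n with
  | zero => rfl
  | succ n ih => rw [Function.iterate_succ', ← Function.comp_assoc, hf, ih]

lemma tendstoUniformly_of_eventually_eq {ι α β : Type*} [UniformSpace β] {F : ι → α → β}
    {f : α → β} {p : Filter ι} (h : ∀ᶠ n in p, F n = f) : TendstoUniformly F f p :=
  fun _ hu => h.mono fun _ hn _ => hn ▸ refl_mem_uniformity hu

lemma norm_exp_two_pi_I_mul (z : ℂ) :
    ‖cexp (2 * Real.pi * I * z)‖ = Real.exp (-(2 * Real.pi * z.im)) := by
  rw [Complex.norm_exp]
  congr 1
  simp [Complex.mul_re, Complex.mul_im]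

lemma periodic_exp_two_pi_I_mul : Function.Periodic (fun z => cexp (2 * Real.pi * I * z)) 1 := by
  intro z
  simp [mul_add, Complex.exp_add]

lemma tendsto_norm_add_natCast_atTop (z : ℂ) : Tendsto (fun n : ℕ => ‖z + n‖) atTop atTop := by
  refine tendsto_atTop_mono (fun n => (le_abs_self _).trans (Complex.abs_re_le_norm _)) ?_
  simpa using tendsto_atTop_add_const_left atTop z.re tendsto_natCast_atTop_atTop

lemma mapsTo_I_add_exp_two_pi_I_mul_upperHalf :
    MapsTo (fun z => I + cexp (2 * Real.pi * I * z)) upperHalf upperHalf := by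
  intro z hz
  have hnorm : ‖cexp (2 * Real.pi * I * z)‖ < 1 := by
    rw [norm_exp_two_pi_I_mul, Real.exp_lt_one_iff, neg_lt_zero]
    exact mul_pos Real.two_pi_pos hz
  have him : -1 < (cexp (2 * Real.pi * I * z)).im := by
    linarith [neg_abs_le (cexp (2 * Real.pi * I * z)).im,
      Complex.abs_im_le_norm (cexp (2 * Real.pi * I * z))]
  show 0 < (I + _).im
  rw [add_im, I_im]
  linarith

/-- **No boundary stability for right compositions.** On the upper half-plane ℍ, with
g(z) = z + 1 (whose iterates tend to the Denjoy–Wolff point ∞) and h(z) = i + e^{2πiz},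
the map h is a holomorphic self-map of ℍ with h ∘ g = h; hence for the sequence g₁ = h,
gₙ = g (n > 1) (encoded with shifted indices: `gseq 0 = h`, `gseq k = g` for k ≥ 1), the
right compositions satisfy Gₙ = h on ℍ for every n ≥ 1, so (Gₙ) converges locally
uniformly on ℍ to the non-constant map h, even though gₙ → g. -/
theorem right_composition_boundary_instability_example :
    MapsTo (fun z => Complex.I + Complex.exp (2 * (Real.pi : ℂ) * Complex.I * z))
      upperHalf upperHalf ∧
    Differentiable ℂ (fun z => Complex.I + Complex.exp (2 * (Real.pi : ℂ) * Complex.I * z)) ∧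
    (∀ z ∈ upperHalf, MapsTo (fun w : ℂ => w + 1) upperHalf upperHalf ∧
      Tendsto (fun n => ‖(fun w : ℂ => w + 1)^[n] z‖) atTop atTop) ∧
    (∀ z ∈ upperHalf,
      (fun z => Complex.I + Complex.exp (2 * (Real.pi : ℂ) * Complex.I * z)) ((fun w : ℂ => w + 1) z) =
      (fun z => Complex.I + Complex.exp (2 * (Real.pi : ℂ) * Complex.I * z)) z) ∧
    (∀ n : ℕ, 1 ≤ n → ∀ z ∈ upperHalf,
      rightComp (fun k => if k = 0 then
          (fun z => Complex.I + Complex.exp (2 * (Real.pi : ℂ) * Complex.I * z))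
        else (fun w : ℂ => w + 1)) n z =
      Complex.I + Complex.exp (2 * (Real.pi : ℂ) * Complex.I * z)) ∧
    TendstoLocallyUniformlyOn
      (rightComp (fun k => if k = 0 then
          (fun z => Complex.I + Complex.exp (2 * (Real.pi : ℂ) * Complex.I * z))
        else (fun w : ℂ => w + 1)))
      (fun z => Complex.I + Complex.exp (2 * (Real.pi : ℂ) * Complex.I * z)) atTop upperHalf ∧
    (∃ z ∈ upperHalf, ∃ w ∈ upperHalf,
      Complex.I + Complex.exp (2 * (Real.pi : ℂ) * Complex.I * z) ≠
      Complex.I + Complex.exp (2 * (Real.pi : ℂ) * Complex.I * w)) := by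
  have hperiodic : (fun z => I + cexp (2 * Real.pi * I * z)) ∘ (· + 1) =
      fun z => I + cexp (2 * Real.pi * I * z) :=
    funext fun z => congrArg (I + ·) (periodic_exp_two_pi_I_mul z)
  have hcomp : ∀ n, 1 ≤ n → rightComp (fun k => if k = 0 then
      (fun z => I + cexp (2 * Real.pi * I * z)) else (· + 1)) n =
      fun z => I + cexp (2 * Real.pi * I * z) := by
    intro n hn
    obtain ⟨m, rfl⟩ := Nat.exists_eq_add_of_le' hn
    exact rightComp_succ_of_comp_eq hperiodic m
  refine ⟨mapsTo_I_add_exp_two_pi_I_mul_upperHalf, by fun_prop,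
    fun z _ => ⟨fun w hw => by simpa [upperHalf] using hw, ?_⟩,
    fun z _ => congrFun hperiodic z, fun n hn z _ => congrFun (hcomp n hn) z,
    (tendstoUniformly_of_eventually_eq ((eventually_ge_atTop 1).mono hcomp)
      ).tendstoLocallyUniformly.tendstoLocallyUniformlyOn,
    I, by simp [upperHalf], 2 * I, by simp [upperHalf], fun h => ?_⟩
  · simpa using tendsto_norm_add_natCast_atTop z
  · have hnorm_eq := congrArg norm (add_left_cancel h)
    simp only [norm_exp_two_pi_I_mul] at hnorm_eq
    simp at hnorm_eq
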